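/- arXiv:2009.11973 — 6 statements merged into one kernel-verified Lean document; each statement's English description precedes it below -/
import Mathlib

section
/- (Sufficient decrease.) Let s : E → ℝ be differentiable with L-Lipschitz gradient (L > 0), let h : E → (−∞, ∞] be a proper closed convex function, and set S = s + h. Fix x ∈ E and suppose v minimizes y ↦ h(y) + (L/2)‖y − (x − (1/L)∇s(x))‖². Then S(x) − S(v) ≥ (1/(2L))‖L(x − v)‖² = (L/2)‖x − v‖². -/
open scoped RealInnerProductSpace
open Set Filter Topology

/-!
Write `u = x - (1/L) ∇s(x)`. The prox objective `y ↦ h y + (L/2)‖y - u‖²` is `L`-strongly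
convex, so comparing its minimizer `v` with the points of the segment `[v, x]` and letting them
tend to `v` gives the three-point inequality
`h v + (L/2)‖v - u‖² + (L/2)‖x - v‖² ≤ h x + (L/2)‖x - u‖²`.
Completing the square turns it into `h v + ⟪∇s(x), v - x⟫ + L‖x - v‖² ≤ h x`, and adding the
descent lemma `s v ≤ s x + ⟪∇s(x), v - x⟫ + (L/2)‖v - x‖²` yields `S v + (L/2)‖x - v‖² ≤ S x`.
-/

lemma le_add_of_forall_add_one_sub_mul_le {a b c : ℝ}
    (h : ∀ t ∈ Ioc (0 : ℝ) 1, a + (1 - t) * c ≤ b) : a + c ≤ b := by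
  have hlim : Tendsto (fun t : ℝ => a + (1 - t) * c) (𝓝[>] 0) (𝓝 (a + c)) := by
    have : Tendsto (fun t : ℝ => a + (1 - t) * c) (𝓝 0) (𝓝 (a + (1 - 0) * c)) :=
      (continuous_const.add ((continuous_const.sub continuous_id).mul continuous_const)).tendsto 0
    simpa using this.mono_left nhdsWithin_le_nhds
  exact le_of_tendsto hlim (eventually_of_mem (Ioc_mem_nhdsGT one_pos) h)

lemma image_one_le_of_deriv_le_affine {f f' : ℝ → ℝ} {K : ℝ}
    (hf : ∀ t, HasDerivAt f (f' t) t) (hf' : ∀ t ∈ Ioo (0 : ℝ) 1, f' t ≤ f' 0 + K * t) :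
    f 1 ≤ f 0 + f' 0 + K / 2 := by
  set g : ℝ → ℝ := fun t => f t - f' 0 * t - K / 2 * t ^ 2
  have hg : ∀ t, HasDerivAt g (f' t - f' 0 - K * t) t := fun t =>
    (((hf t).sub ((hasDerivAt_id' t).const_mul (f' 0))).sub
      ((hasDerivAt_pow 2 t).const_mul (K / 2))).congr_deriv (by push_cast; ring)
  have hanti : AntitoneOn g (Icc 0 1) := by
    refine antitoneOn_of_hasDerivWithinAt_nonpos (convex_Icc 0 1)
      (fun t _ => (hg t).continuousAt.continuousWithinAt)
      (fun t _ => (hg t).hasDerivWithinAt) ?_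
    intro t ht
    rw [interior_Icc] at ht
    linarith [hf' t ht]
  have := hanti (left_mem_Icc.2 zero_le_one) (right_mem_Icc.2 zero_le_one) zero_le_one
  simp only [g] at this
  linarith

lemma EReal.ne_top_of_add_coe_le_add_coe {a b : EReal} {r q : ℝ} (hb : b ≠ ⊤)
    (h : a + r ≤ b + q) : a ≠ ⊤ :=
  (EReal.add_ne_top_iff_ne_top_left (EReal.coe_ne_bot r) (EReal.coe_ne_top r)).1 <|
    ne_top_of_le_ne_top (EReal.add_ne_top hb (EReal.coe_ne_top q)) h

section InnerProductSpace

variable {E : Type*} [NormedAddCommGroup E] [InnerProductSpace ℝ E]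

lemma norm_smul_add_one_sub_smul_sq (a b : E) (t : ℝ) :
    ‖t • a + (1 - t) • b‖ ^ 2 =
      t * ‖a‖ ^ 2 + (1 - t) * ‖b‖ ^ 2 - t * (1 - t) * ‖a - b‖ ^ 2 := by
  simp only [← real_inner_self_eq_norm_sq, inner_add_left, inner_add_right, inner_sub_left,
    inner_sub_right, real_inner_smul_left, real_inner_smul_right, real_inner_comm a b]
  ring

lemma half_mul_norm_sub_sub_one_div_smul_sq {L : ℝ} (hL : L ≠ 0) (x y g : E) :
    L / 2 * ‖y - (x - (1 / L) • g)‖ ^ 2 =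
      L / 2 * ‖y - x‖ ^ 2 + ⟪g, y - x⟫ + 1 / (2 * L) * ‖g‖ ^ 2 := by
  rw [show y - (x - (1 / L) • g) = (y - x) + (1 / L) • g by abel, norm_add_sq_real,
    real_inner_smul_right, norm_smul, mul_pow, Real.norm_eq_abs, sq_abs, real_inner_comm]
  field_simp

lemma hasDerivAt_comp_add_smul [CompleteSpace E] {s : E → ℝ} (hs : Differentiable ℝ s)
    (a d : E) (t : ℝ) :
    HasDerivAt (fun t : ℝ => s (a + t • d)) ⟪gradient s (a + t • d), d⟫ t := by
  rw [inner_gradient_left]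
  exact (hs _).hasFDerivAt.comp_hasDerivAt t
    (((hasDerivAt_id t).smul_const d).const_add a |>.congr_deriv (one_smul ℝ d))

lemma le_add_inner_gradient_add_half_mul_norm_sq [CompleteSpace E] {s : E → ℝ}
    (hs : Differentiable ℝ s) {L : ℝ}
    (hLip : ∀ a b : E, ‖gradient s a - gradient s b‖ ≤ L * ‖a - b‖) (a b : E) :
    s b ≤ s a + ⟪gradient s a, b - a⟫ + L / 2 * ‖b - a‖ ^ 2 := by
  have hderiv_le : ∀ t ∈ Ioo (0 : ℝ) 1, ⟪gradient s (a + t • (b - a)), b - a⟫ ≤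
      ⟪gradient s a, b - a⟫ + L * ‖b - a‖ ^ 2 * t := by
    intro t ht
    have hgrad : ‖gradient s (a + t • (b - a)) - gradient s a‖ ≤ L * (t * ‖b - a‖) := by
      simpa [norm_smul, abs_of_pos ht.1] using hLip (a + t • (b - a)) a
    calc ⟪gradient s (a + t • (b - a)), b - a⟫
        = ⟪gradient s a, b - a⟫ + ⟪gradient s (a + t • (b - a)) - gradient s a, b - a⟫ := by
          rw [inner_sub_left]; ring
      _ ≤ ⟪gradient s a, b - a⟫ + L * (t * ‖b - a‖) * ‖b - a‖ := by
          gcongr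
          exact (real_inner_le_norm _ _).trans (by gcongr)
      _ = _ := by ring
  have key := image_one_le_of_deriv_le_affine (hasDerivAt_comp_add_smul hs a (b - a))
    (by simpa only [zero_smul, add_zero] using hderiv_le)
  simp only [zero_smul, one_smul, add_zero, add_sub_cancel] at key
  linarith

lemma add_mul_norm_sub_sq_le_of_forall_le {h : E → EReal} (hbot : ∀ y, h y ≠ ⊥)
    (hconvex : ∀ x y : E, ∀ t : ℝ, 0 ≤ t → t ≤ 1 →
      h (t • x + (1 - t) • y) ≤ (t : EReal) * h x + ((1 - t : ℝ) : EReal) * h y)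
    {c : ℝ} {u v : E}
    (hmin : ∀ y, h v + ((c * ‖v - u‖ ^ 2 : ℝ) : EReal) ≤ h y + ((c * ‖y - u‖ ^ 2 : ℝ) : EReal))
    (y : E) :
    h v + ((c * ‖v - u‖ ^ 2 + c * ‖y - v‖ ^ 2 : ℝ) : EReal) ≤
      h y + ((c * ‖y - u‖ ^ 2 : ℝ) : EReal) := by
  obtain hy_top | hy_top := eq_or_ne (h y) ⊤
  · rw [hy_top, EReal.top_add_coe]
    exact le_top
  have hv_top : h v ≠ ⊤ := EReal.ne_top_of_add_coe_le_add_coe hy_top (hmin y)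
  set α := (h v).toReal
  set β := (h y).toReal
  have hα : h v = α := (EReal.coe_toReal hv_top (hbot v)).symm
  have hβ : h y = β := (EReal.coe_toReal hy_top (hbot y)).symm
  rw [hα, hβ]
  norm_cast
  rw [← add_assoc]
  refine le_add_of_forall_add_one_sub_mul_le fun t ⟨ht0, ht1⟩ => ?_
  set z := t • y + (1 - t) • v
  have hz : h z ≤ ((t * β + (1 - t) * α : ℝ) : EReal) := by
    simpa [hα, hβ] using hconvex y v t ht0.le ht1
  have hmin_z : α + c * ‖v - u‖ ^ 2 ≤ t * β + (1 - t) * α + c * ‖z - u‖ ^ 2 := by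
    have := (hα ▸ hmin z).trans (add_le_add_left hz _)
    exact_mod_cast this
  have hnorm : ‖z - u‖ ^ 2 =
      t * ‖y - u‖ ^ 2 + (1 - t) * ‖v - u‖ ^ 2 - t * (1 - t) * ‖y - v‖ ^ 2 := by
    rw [show z - u = t • (y - u) + (1 - t) • (v - u) by simp only [z]; module,
      norm_smul_add_one_sub_smul_sq, sub_sub_sub_cancel_right]
  refine le_of_mul_le_mul_left ?_ ht0
  rw [hnorm] at hmin_z
  linarith

end InnerProductSpace

theorem sufficient_decrease_general
    {E : Type*} [NormedAddCommGroup E] [InnerProductSpace ℝ E] [CompleteSpace E]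
    (s : E → ℝ) (hs : Differentiable ℝ s)
    (L : ℝ) (hL : 0 < L)
    (hLip : ∀ a b : E, ‖gradient s a - gradient s b‖ ≤ L * ‖a - b‖)
    (h : E → EReal)
    (hproper_bot : ∀ x : E, h x ≠ ⊥)
    (hconvex : ∀ x y : E, ∀ t : ℝ, 0 ≤ t → t ≤ 1 →
      h (t • x + (1 - t) • y) ≤ (t : EReal) * h x + ((1 - t : ℝ) : EReal) * h y)
    (S : E → EReal) (hS : ∀ x : E, S x = (s x : EReal) + h x)
    (x v : E)
    (hmin : ∀ y : E,
      h v + ((L / 2 * ‖v - (x - (1 / L) • gradient s x)‖ ^ 2 : ℝ) : EReal)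
        ≤ h y + ((L / 2 * ‖y - (x - (1 / L) • gradient s x)‖ ^ 2 : ℝ) : EReal)) :
    S v + ((1 / (2 * L) * ‖L • (x - v)‖ ^ 2 : ℝ) : EReal) ≤ S x := by
  have hprox := add_mul_norm_sub_sq_le_of_forall_le hproper_bot hconvex hmin x
  obtain hx_top | hx_top := eq_or_ne (h x) ⊤
  · rw [hS x, hx_top, EReal.add_top_of_ne_bot (EReal.coe_ne_bot _)]
    exact le_top
  have hv_top : h v ≠ ⊤ := EReal.ne_top_of_add_coe_le_add_coe hx_top (hmin x)
  have ha := (EReal.coe_toReal hx_top (hproper_bot x)).symm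
  have hb := (EReal.coe_toReal hv_top (hproper_bot v)).symm
  rw [ha, hb] at hprox
  rw [hS, hS, ha, hb]
  norm_cast at hprox ⊢
  have hdesc := le_add_inner_gradient_add_half_mul_norm_sq hs hLip x v
  have hv_sq := half_mul_norm_sub_sub_one_div_smul_sq hL.ne' x v (gradient s x)
  have hx_sq := half_mul_norm_sub_sub_one_div_smul_sq hL.ne' x x (gradient s x)
  have hscale : 1 / (2 * L) * ‖L • (x - v)‖ ^ 2 = L / 2 * ‖x - v‖ ^ 2 := by
    rw [norm_smul, Real.norm_of_nonneg hL.le]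
    field_simp
  rw [sub_self, norm_zero, inner_zero_right] at hx_sq
  rw [norm_sub_rev v x] at hdesc hv_sq
  linarith

/-- Sufficient decrease: let `s : E → ℝ` be differentiable with `L`-Lipschitz gradient
(`L > 0`), `h` a proper closed convex function, `S = s + h`. If `v` minimizes
`y ↦ h(y) + (L/2)‖y − (x − (1/L)∇s(x))‖²`, then
`S(x) − S(v) ≥ (1/(2L))‖L(x − v)‖²`. -/
theorem sufficient_decrease
    {E : Type*} [NormedAddCommGroup E] [InnerProductSpace ℝ E] [CompleteSpace E]
    (s : E → ℝ) (hs : Differentiable ℝ s)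
    (L : ℝ) (hL : 0 < L)
    (hLip : ∀ a b : E, ‖gradient s a - gradient s b‖ ≤ L * ‖a - b‖)
    (h : E → EReal)
    (hproper_bot : ∀ x : E, h x ≠ ⊥) (hproper_top : ∃ x : E, h x ≠ ⊤)
    (hclosed : LowerSemicontinuous h)
    (hconvex : ∀ x y : E, ∀ t : ℝ, 0 ≤ t → t ≤ 1 →
      h (t • x + (1 - t) • y) ≤ (t : EReal) * h x + ((1 - t : ℝ) : EReal) * h y)
    (S : E → EReal) (hS : ∀ x : E, S x = (s x : EReal) + h x)
    (x v : E)
    (hmin : ∀ y : E,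
      h v + ((L / 2 * ‖v - (x - (1 / L) • gradient s x)‖ ^ 2 : ℝ) : EReal)
        ≤ h y + ((L / 2 * ‖y - (x - (1 / L) • gradient s x)‖ ^ 2 : ℝ) : EReal)) :
    S v + ((1 / (2 * L) * ‖L • (x - v)‖ ^ 2 : ℝ) : EReal) ≤ S x :=
  sufficient_decrease_general s hs L hL hLip h hproper_bot hconvex S hS x v hmin
end

section
/- (Block sufficient decrease.) In the alternating-minimization setup, for every (n, u) ∈ E × F: H(n, u) − H(T¹_{η₁}(n, u), u) ≥ (1/(2η₁))‖G¹_{η₁}(n, u)‖², where T¹_{η₁}(n, u) = prox_{(1/η₁)g(·,u)}(n − (1/η₁)∇l₁(n)) and G¹_{η₁}(n, u) = η₁(n − T¹_{η₁}(n, u)); similarly H(n, u) − H(n, T²_{η₂}(n, u)) ≥ (1/(2η₂))‖G²_{η₂}(n, u)‖², where T²_{η₂}(n, u) = prox_{(1/η₂)g(n,·)}(u − (1/η₂)∇l₂(u)) and G²_{η₂}(n, u) = η₂(u − T²_{η₂}(n, u)). -/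
/-!
For a convex `φ`, the prox objective `φ + η/2 ‖· - z‖²` is `η`-strongly convex, so its minimizer
`T` satisfies the three-point inequality
`φ T + η/2 ‖T - z‖² + η/2 ‖n - T‖² ≤ φ n + η/2 ‖n - z‖²`.
With `z = n - ∇l(n)/η` this reads `φ T + ⟪∇l(n), T - n⟫ + η ‖T - n‖² ≤ φ n`, while the descent
lemma for the `L`-smooth `l` gives `l T ≤ l n + ⟪∇l(n), T - n⟫ + L/2 ‖T - n‖²`. Adding, the
objective drops by at least `(η - L/2) ‖T - n‖² ≥ η/2 ‖T - n‖²`. Each block of the theorem is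
this one-variable statement for a partial function of `g`, which is convex as the restriction of
`g` to an affine slice.
-/

open scoped RealInnerProductSpace

section Descent

variable {E : Type*} [NormedAddCommGroup E] [NormedSpace ℝ E]

theorem le_add_fderiv_add_sq_of_lipschitz_fderiv {l : E → ℝ} (hl : Differentiable ℝ l) {L : ℝ}
    (hLip : ∀ a b, ‖fderiv ℝ l a - fderiv ℝ l b‖ ≤ L * ‖a - b‖) (a b : E) :
    l b ≤ l a + fderiv ℝ l a (b - a) + L / 2 * ‖b - a‖ ^ 2 := by
  set v := b - a
  let ψ : ℝ → ℝ := fun t ↦ l (a + t • v) - t * fderiv ℝ l a v - L / 2 * t ^ 2 * ‖v‖ ^ 2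
  let ψ' : ℝ → ℝ := fun t ↦ fderiv ℝ l (a + t • v) v - fderiv ℝ l a v - L * t * ‖v‖ ^ 2
  have hψ : ∀ t, HasDerivAt ψ (ψ' t) t := by
    intro t
    have hline : HasDerivAt (fun t : ℝ ↦ a + t • v) v t :=
      ((hasDerivAt_id t).smul_const v).const_add a |>.congr_deriv (one_smul ℝ v)
    have hcomp := (hl (a + t • v)).hasFDerivAt.comp_hasDerivAt t hline
    exact ((hcomp.sub ((hasDerivAt_id t).mul_const _)).sub
      (((hasDerivAt_pow 2 t).const_mul (L / 2)).mul_const _)).congr_deriv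
        (by simp only [one_mul, Nat.cast_ofNat, Nat.add_one_sub_one, pow_one]; ring)
  have hψ'_nonpos : ∀ t ∈ interior (Set.Icc (0 : ℝ) 1), ψ' t ≤ 0 := by
    intro t ht
    rw [interior_Icc] at ht
    have hslope : fderiv ℝ l (a + t • v) v - fderiv ℝ l a v ≤ L * t * ‖v‖ ^ 2 :=
      calc fderiv ℝ l (a + t • v) v - fderiv ℝ l a v
          = (fderiv ℝ l (a + t • v) - fderiv ℝ l a) v := rfl
        _ ≤ ‖fderiv ℝ l (a + t • v) - fderiv ℝ l a‖ * ‖v‖ :=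
          (Real.le_norm_self _).trans (ContinuousLinearMap.le_opNorm _ _)
        _ ≤ L * ‖a + t • v - a‖ * ‖v‖ := by gcongr; exact hLip _ _
        _ = L * t * ‖v‖ ^ 2 := by
          rw [add_sub_cancel_left, norm_smul, Real.norm_of_nonneg ht.1.le]; ring
    simp only [ψ']
    linarith
  have hanti : AntitoneOn ψ (Set.Icc 0 1) :=
    antitoneOn_of_hasDerivWithinAt_nonpos (convex_Icc 0 1)
      (fun t _ ↦ (hψ t).continuousAt.continuousWithinAt)
      (fun t _ ↦ (hψ t).hasDerivWithinAt) hψ'_nonpos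
  have h01 := hanti (Set.left_mem_Icc.2 zero_le_one) (Set.right_mem_Icc.2 zero_le_one) zero_le_one
  simp only [ψ, zero_smul, add_zero, one_smul, add_sub_cancel, v] at h01
  linarith

end Descent

theorem le_add_inner_gradient_add_sq_of_lipschitz_gradient {E : Type*} [NormedAddCommGroup E]
    [InnerProductSpace ℝ E] [CompleteSpace E] {l : E → ℝ} (hl : Differentiable ℝ l) {L : ℝ}
    (hLip : ∀ a b, ‖gradient l a - gradient l b‖ ≤ L * ‖a - b‖) (a b : E) :
    l b ≤ l a + ⟪gradient l a, b - a⟫ + L / 2 * ‖b - a‖ ^ 2 := by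
  have hLip' : ∀ a b, ‖fderiv ℝ l a - fderiv ℝ l b‖ ≤ L * ‖a - b‖ := fun a b ↦ by
    simpa [gradient, ← map_sub] using hLip a b
  simpa [gradient, InnerProductSpace.toDual_symm_apply] using
    le_add_fderiv_add_sq_of_lipschitz_fderiv hl hLip' a b

section StrongConvexity

variable {E : Type*} [NormedAddCommGroup E] [NormedSpace ℝ E] {s : Set E} {f : E → ℝ} {m : ℝ}

theorem StrongConvexOn.add_sq_le_of_isMinOn (hf : StrongConvexOn s m f) {x y : E}
    (hx : x ∈ s) (hy : y ∈ s) (hmin : IsMinOn f s x) :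
    f x + m / 2 * ‖y - x‖ ^ 2 ≤ f y := by
  have hstep : ∀ t ∈ Set.Ioo (0 : ℝ) 1, f x + (1 - t) * (m / 2 * ‖y - x‖ ^ 2) ≤ f y := by
    rintro t ⟨ht0, ht1⟩
    have hcomb := hf.2 hy hx ht0.le (sub_nonneg.2 ht1.le) (add_sub_cancel t 1)
    have hle : f x ≤ f (t • y + (1 - t) • x) :=
      hmin (hf.1 hy hx ht0.le (sub_nonneg.2 ht1.le) (add_sub_cancel t 1))
    simp only [smul_eq_mul] at hcomb
    have : t * (f x + (1 - t) * (m / 2 * ‖y - x‖ ^ 2)) ≤ t * f y := by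
      nlinarith
    exact le_of_mul_le_mul_left this ht0
  have hlim : Filter.Tendsto (fun t : ℝ ↦ f x + (1 - t) * (m / 2 * ‖y - x‖ ^ 2))
      (nhdsWithin 0 (Set.Ioi 0)) (nhds (f x + (1 - 0) * (m / 2 * ‖y - x‖ ^ 2))) :=
    (Continuous.tendsto (by fun_prop) 0).mono_left nhdsWithin_le_nhds
  simpa using le_of_tendsto hlim (Filter.eventually_of_mem (Ioo_mem_nhdsGT zero_lt_one) hstep)

end StrongConvexity

theorem ConvexOn.strongConvexOn_add_sq_norm_sub {E : Type*} [NormedAddCommGroup E]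
    [InnerProductSpace ℝ E] {s : Set E} {φ : E → ℝ} (hφ : ConvexOn ℝ s φ) (η : ℝ) (z : E) :
    StrongConvexOn s η fun x ↦ φ x + η / 2 * ‖x - z‖ ^ 2 := by
  rw [strongConvexOn_iff_convex]
  have haffine : ConvexOn ℝ s fun x ↦ φ x + ((-η) • innerₛₗ ℝ z) x + η / 2 * ‖z‖ ^ 2 :=
    (hφ.add (LinearMap.convexOn _ hφ.1)).add_const _
  refine haffine.congr fun x _ ↦ ?_
  simp only [LinearMap.smul_apply, innerₛₗ_apply_apply, smul_eq_mul, norm_sub_sq_real,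
    real_inner_comm]
  ring

section Slices

variable {E F : Type*} [AddCommGroup E] [Module ℝ E] [AddCommGroup F] [Module ℝ F]
  {g : E × F → ℝ}

theorem ConvexOn.comp_prodMk_const (hg : ConvexOn ℝ Set.univ g) (u : F) :
    ConvexOn ℝ Set.univ fun y ↦ g (y, u) := by
  simpa [Function.comp_def] using
    hg.comp_affineMap ((AffineMap.id ℝ E).prod (AffineMap.const ℝ E u))

theorem ConvexOn.comp_const_prodMk (hg : ConvexOn ℝ Set.univ g) (n : E) :
    ConvexOn ℝ Set.univ fun w ↦ g (n, w) := by
  simpa [Function.comp_def] using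
    hg.comp_affineMap ((AffineMap.const ℝ F n).prod (AffineMap.id ℝ F))

end Slices

theorem sufficient_decrease_of_proxGradient_step {E : Type*} [NormedAddCommGroup E]
    [InnerProductSpace ℝ E] [CompleteSpace E] {φ l : E → ℝ} (hφ : ConvexOn ℝ Set.univ φ)
    (hl : Differentiable ℝ l) {L η : ℝ} (hLip : ∀ a b, ‖gradient l a - gradient l b‖ ≤ L * ‖a - b‖)
    (hη : 0 < η) (hLη : L ≤ η) {n T : E}
    (hT : ∀ y, φ T + η / 2 * ‖T - (n - (1 / η) • gradient l n)‖ ^ 2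
      ≤ φ y + η / 2 * ‖y - (n - (1 / η) • gradient l n)‖ ^ 2) :
    1 / (2 * η) * ‖η • (n - T)‖ ^ 2 ≤ φ n + l n - (φ T + l T) := by
  set z := n - (1 / η) • gradient l n
  have hthree : φ T + η / 2 * ‖T - z‖ ^ 2 + η / 2 * ‖n - T‖ ^ 2 ≤ φ n + η / 2 * ‖n - z‖ ^ 2 :=
    (hφ.strongConvexOn_add_sq_norm_sub η z).add_sq_le_of_isMinOn (Set.mem_univ T)
      (Set.mem_univ n) fun y _ ↦ hT y
  have hdescent := le_add_inner_gradient_add_sq_of_lipschitz_gradient hl hLip n T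
  have hexpand : η / 2 * ‖T - z‖ ^ 2
      = η / 2 * ‖n - z‖ ^ 2 + ⟪gradient l n, T - n⟫ + η / 2 * ‖T - n‖ ^ 2 := by
    have hTz : T - z = (T - n) + (1 / η) • gradient l n := by simp only [z]; abel
    have hnz : n - z = (1 / η) • gradient l n := by simp only [z]; abel
    rw [hTz, hnz, norm_add_sq_real, real_inner_smul_right, real_inner_comm, norm_smul,
      Real.norm_of_nonneg (by positivity)]
    field_simp
    ring
  have hscale : 1 / (2 * η) * ‖η • (n - T)‖ ^ 2 = η / 2 * ‖T - n‖ ^ 2 := by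
    rw [norm_smul, Real.norm_of_nonneg hη.le, norm_sub_rev]
    field_simp
  rw [norm_sub_rev n T] at hthree
  have hLη_sq := mul_le_mul_of_nonneg_right hLη (sq_nonneg ‖T - n‖)
  linarith

theorem block_sufficient_decrease_general
    {E : Type*} [NormedAddCommGroup E] [InnerProductSpace ℝ E] [CompleteSpace E]
    {F : Type*} [NormedAddCommGroup F] [InnerProductSpace ℝ F] [CompleteSpace F]
    (g : E × F → ℝ) (hg : ConvexOn ℝ Set.univ g)
    (l₁ : E → ℝ) (l₂ : F → ℝ)
    (hl₁diff : Differentiable ℝ l₁) (hl₂diff : Differentiable ℝ l₂)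
    (L₁ L₂ : ℝ) (hL₁ : 0 < L₁) (hL₂ : 0 < L₂)
    (hLip₁ : ∀ a b : E, ‖gradient l₁ a - gradient l₁ b‖ ≤ L₁ * ‖a - b‖)
    (hLip₂ : ∀ a b : F, ‖gradient l₂ a - gradient l₂ b‖ ≤ L₂ * ‖a - b‖)
    (η₁ η₂ : ℝ) (hη₁ : L₁ ≤ η₁) (hη₂ : L₂ ≤ η₂)
    (H : E × F → ℝ) (hH : ∀ p : E × F, H p = g p + l₁ p.1 + l₂ p.2)
    (n : E) (u : F) (T1 : E) (T2 : F)
    (hT1 : ∀ y : E,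
      g (T1, u) + η₁ / 2 * ‖T1 - (n - (1 / η₁) • gradient l₁ n)‖ ^ 2
        ≤ g (y, u) + η₁ / 2 * ‖y - (n - (1 / η₁) • gradient l₁ n)‖ ^ 2)
    (hT2 : ∀ w : F,
      g (n, T2) + η₂ / 2 * ‖T2 - (u - (1 / η₂) • gradient l₂ u)‖ ^ 2
        ≤ g (n, w) + η₂ / 2 * ‖w - (u - (1 / η₂) • gradient l₂ u)‖ ^ 2) :
    H (n, u) - H (T1, u) ≥ 1 / (2 * η₁) * ‖η₁ • (n - T1)‖ ^ 2 ∧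
    H (n, u) - H (n, T2) ≥ 1 / (2 * η₂) * ‖η₂ • (u - T2)‖ ^ 2 := by
  have h₁ := sufficient_decrease_of_proxGradient_step (hg.comp_prodMk_const u) hl₁diff hLip₁
    (hL₁.trans_le hη₁) hη₁ hT1
  have h₂ := sufficient_decrease_of_proxGradient_step (hg.comp_const_prodMk n) hl₂diff hLip₂
    (hL₂.trans_le hη₂) hη₂ hT2
  simp only [hH]
  constructor <;> linarith

/-- Block sufficient decrease in the alternating-minimization setup: for every `(n, u)`,
`H(n, u) − H(T¹(n, u), u) ≥ (1/(2η₁))‖G¹(n, u)‖²` where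
`T¹(n, u) = prox_{(1/η₁)g(·,u)}(n − (1/η₁)∇l₁(n))` and `G¹(n, u) = η₁(n − T¹(n, u))`;
and similarly for the second block. -/
theorem block_sufficient_decrease
    {E : Type*} [NormedAddCommGroup E] [InnerProductSpace ℝ E] [CompleteSpace E]
    {F : Type*} [NormedAddCommGroup F] [InnerProductSpace ℝ F] [CompleteSpace F]
    (g : E × F → ℝ) (hg : ConvexOn ℝ Set.univ g)
    (l₁ : E → ℝ) (l₂ : F → ℝ)
    (hl₁conv : ConvexOn ℝ Set.univ l₁) (hl₂conv : ConvexOn ℝ Set.univ l₂)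
    (hl₁diff : Differentiable ℝ l₁) (hl₂diff : Differentiable ℝ l₂)
    (L₁ L₂ : ℝ) (hL₁ : 0 < L₁) (hL₂ : 0 < L₂)
    (hLip₁ : ∀ a b : E, ‖gradient l₁ a - gradient l₁ b‖ ≤ L₁ * ‖a - b‖)
    (hLip₂ : ∀ a b : F, ‖gradient l₂ a - gradient l₂ b‖ ≤ L₂ * ‖a - b‖)
    (η₁ η₂ : ℝ) (hη₁ : L₁ ≤ η₁) (hη₂ : L₂ ≤ η₂)
    (H : E × F → ℝ) (hH : ∀ p : E × F, H p = g p + l₁ p.1 + l₂ p.2)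
    (n : E) (u : F) (T1 : E) (T2 : F)
    (hT1 : ∀ y : E,
      g (T1, u) + η₁ / 2 * ‖T1 - (n - (1 / η₁) • gradient l₁ n)‖ ^ 2
        ≤ g (y, u) + η₁ / 2 * ‖y - (n - (1 / η₁) • gradient l₁ n)‖ ^ 2)
    (hT2 : ∀ w : F,
      g (n, T2) + η₂ / 2 * ‖T2 - (u - (1 / η₂) • gradient l₂ u)‖ ^ 2
        ≤ g (n, w) + η₂ / 2 * ‖w - (u - (1 / η₂) • gradient l₂ u)‖ ^ 2) :
    H (n, u) - H (T1, u) ≥ 1 / (2 * η₁) * ‖η₁ • (n - T1)‖ ^ 2 ∧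
    H (n, u) - H (n, T2) ≥ 1 / (2 * η₂) * ‖η₂ • (u - T2)‖ ^ 2 :=
  block_sufficient_decrease_general g hg l₁ l₂ hl₁diff hl₂diff L₁ L₂ hL₁ hL₂ hLip₁ hLip₂ η₁ η₂ hη₁
    hη₂ H hH n u T1 T2 hT1 hT2
end

section
/- Let (A_k)_{k≥0} be a nonnegative sequence of real numbers and γ > 0 such that A_k − A_{k+1} ≥ γ·A_{k+1}² for all k ≥ 0, A₁ ≤ 1.5/γ, and A₂ ≤ 1.5/(2γ). Then A_k ≤ (1.5/γ)·(1/k) for all k ≥ 1. -/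
/-!
Put `c = 1.5 / γ`. Since `x ↦ x + γ x²` is increasing on `[0, ∞)`, a violation
`A (n + 1) > c / (n + 1)` would force `A n > c / (n + 1) + γ (c / (n + 1))² ≥ c / n`, the last
step being equivalent to `n + 1 ≤ γ c n`, i.e. to `n ≥ 2`. So the bound propagates by induction
from `k = 2`, and `k = 1` is a hypothesis.
-/

theorem add_mul_sq_lt_of_lt {γ x a b : ℝ} (hγ : 0 ≤ γ) (hx : 0 ≤ x) (hxb : x < b)
    (hab : γ * b ^ 2 ≤ a - b) : x + γ * x ^ 2 < a := by
  have : γ * x ^ 2 ≤ γ * b ^ 2 := by gcongr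
  linarith

theorem div_le_div_add_one_add_mul_sq {γ c n : ℝ} (hc : 0 < c) (hn : 0 < n)
    (h : n + 1 ≤ γ * c * n) : c / n ≤ c / (n + 1) + γ * (c / (n + 1)) ^ 2 := by
  rw [div_le_iff₀ hn]
  field_simp
  nlinarith [mul_le_mul_of_nonneg_left h hc.le]

theorem le_div_of_mul_sq_le_sub {A : ℕ → ℝ} {γ c : ℝ} {m : ℕ} (hγ : 0 ≤ γ) (hc : 0 < c)
    (hrec : ∀ k, γ * A (k + 1) ^ 2 ≤ A k - A (k + 1))
    (hγc : (m + 1 : ℝ) ≤ γ * c * m) (hAm : A m ≤ c / m) :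
    ∀ k, m ≤ k → A k ≤ c / k := by
  have hm : (0 : ℝ) < m := Nat.cast_pos.2 (Nat.pos_of_ne_zero (by rintro rfl; norm_num at hγc))
  intro k hk
  induction k, hk using Nat.le_induction with
  | base => exact hAm
  | succ n hmn ih =>
    by_contra! hlt
    push_cast at hlt
    have hmn' : (m : ℝ) ≤ n := by exact_mod_cast hmn
    have hγcn : (n : ℝ) + 1 ≤ γ * c * n := by nlinarith
    have hAn := add_mul_sq_lt_of_lt hγ (by positivity) hlt (hrec n)
    linarith [div_le_div_add_one_add_mul_sq hc (by linarith) hγcn]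

theorem seq_one_over_k_bound_general (A : ℕ → ℝ)
    (γ : ℝ) (hγ : 0 < γ)
    (hrec : ∀ k : ℕ, A k - A (k + 1) ≥ γ * (A (k + 1)) ^ 2)
    (h1 : A 1 ≤ 1.5 / γ) (h2 : A 2 ≤ 1.5 / (2 * γ)) :
    ∀ k : ℕ, 1 ≤ k → A k ≤ (1.5 / γ) * (1 / (k : ℝ)) := by
  intro k hk
  rw [mul_one_div]
  rcases hk.eq_or_lt with rfl | hk
  · simpa using h1
  · refine le_div_of_mul_sq_le_sub hγ.le (by positivity) hrec ?_ ?_ k hk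
    · field_simp
      norm_num
    · simpa [div_div, mul_comm] using h2

/-- If `(A_k)` is a nonnegative real sequence with `A_k − A_{k+1} ≥ γ·A_{k+1}²` for all `k`,
`A₁ ≤ 1.5/γ` and `A₂ ≤ 1.5/(2γ)` for some `γ > 0`, then `A_k ≤ (1.5/γ)·(1/k)` for `k ≥ 1`. -/
theorem seq_one_over_k_bound (A : ℕ → ℝ) (hA : ∀ k : ℕ, 0 ≤ A k)
    (γ : ℝ) (hγ : 0 < γ)
    (hrec : ∀ k : ℕ, A k - A (k + 1) ≥ γ * (A (k + 1)) ^ 2)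
    (h1 : A 1 ≤ 1.5 / γ) (h2 : A 2 ≤ 1.5 / (2 * γ)) :
    ∀ k : ℕ, 1 ≤ k → A k ≤ (1.5 / γ) * (1 / (k : ℝ)) :=
  seq_one_over_k_bound_general A γ hγ hrec h1 h2
end

section
/- Let (A_k)_{k≥0} be a nonnegative nonincreasing sequence of real numbers and γ̃ > 0 such that A_k − A_{k+1} ≥ γ̃·A_{k+1}² for all k ≥ 0. Then for all k ≥ 1: A_k ≤ max{2·A₀, 1.5/γ̃}/k. -/
/-- If `(A_k)` is a nonnegative nonincreasing real sequence with
`A_k − A_{k+1} ≥ γ̃·A_{k+1}²` for all `k`, for some `γ̃ > 0`, then for all `k ≥ 1`: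
`A_k ≤ max{2·A₀, 1.5/γ̃}/k`. -/
theorem seq_max_bound (A : ℕ → ℝ) (hA : ∀ k : ℕ, 0 ≤ A k)
    (hmono : ∀ k : ℕ, A (k + 1) ≤ A k)
    (γ : ℝ) (hγ : 0 < γ)
    (hrec : ∀ k : ℕ, A k - A (k + 1) ≥ γ * (A (k + 1)) ^ 2) :
    ∀ k : ℕ, 1 ≤ k → A k ≤ max (2 * A 0) (1.5 / γ) / (k : ℝ) := by
  set C := max (2 * A 0) (1.5 / γ) with hCdef
  have hC1 : 2 * A 0 ≤ C := le_max_left _ _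
  have hC2 : 1.5 / γ ≤ C := le_max_right _ _
  have hγC : 1.5 ≤ γ * C := by
    rw [div_le_iff₀ hγ] at hC2; linarith
  have hCpos : 0 < C := lt_of_lt_of_le (by positivity) hC2
  have main : ∀ k : ℕ, 2 ≤ k → A k ≤ C / (k : ℝ) := by
    intro k hk
    induction k, hk using Nat.le_induction with
    | base =>
        have h0 := hmono 0
        have h1 := hmono 1
        push_cast
        linarith [hA 0]
    | succ k hk ih =>
        have hKR : (2 : ℝ) ≤ (k : ℝ) := by exact_mod_cast hk
        have hK : (0 : ℝ) < (k : ℝ) := by linarith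
        have hK1 : (0 : ℝ) < (k : ℝ) + 1 := by linarith
        by_contra h
        push_neg at h
        push_cast at h ih
        have h' : C < A (k + 1) * ((k : ℝ) + 1) := by
          rw [div_lt_iff₀ hK1] at h; linarith
        have ih' : A k * (k : ℝ) ≤ C := by
          rw [le_div_iff₀ hK] at ih; linarith
        have hx := hrec k
        have hxpos : 0 < A (k + 1) := by nlinarith
        -- step 1: γ x² K < x
        have s1 : γ * (A (k + 1)) ^ 2 * (k : ℝ) < A (k + 1) := by
          have := mul_le_mul_of_nonneg_right (show A (k+1) + γ * (A (k+1))^2 ≤ A k by linarith) hK.le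
          nlinarith
        -- step 2: γ x K < 1
        have s2 : γ * A (k + 1) * (k : ℝ) < 1 := by nlinarith
        -- step 3: contradiction with x > C/(K+1), γC ≥ 1.5, K ≥ 2
        nlinarith [mul_pos hγ hK, mul_le_mul_of_nonneg_right hγC hK.le]
  intro k hk
  rcases eq_or_lt_of_le hk with h1 | h2
  · subst_eqs
    simp only [Nat.cast_one, div_one]
    have := hmono 0
    linarith [hA 0]
  · exact main k h2
end

section
/- Let (A_k)_{k≥0} be a nonnegative sequence of real numbers and γ > 0 such that A_k − A_{k+1} ≥ γ·A_{k+1}² for all k ≥ 0. Then for every integer k > 1: A_k ≤ max{(1/2)^{(k−1)/2}·A₀, 4/(γ·(k − 1))}. -/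
/-- If `(A_k)` is a nonnegative real sequence with `A_k − A_{k+1} ≥ γ·A_{k+1}²` for all `k`,
for some `γ > 0`, then for every integer `k > 1`:
`A_k ≤ max{(1/2)^{(k−1)/2}·A₀, 4/(γ·(k − 1))}`. -/
theorem seq_linear_or_geometric_bound (A : ℕ → ℝ) (hA : ∀ k : ℕ, 0 ≤ A k)
    (γ : ℝ) (hγ : 0 < γ)
    (hrec : ∀ k : ℕ, A k - A (k + 1) ≥ γ * (A (k + 1)) ^ 2) :
    ∀ k : ℕ, 1 < k →
      A k ≤ max (((1 : ℝ) / 2) ^ (((k : ℝ) - 1) / 2) * A 0) (4 / (γ * ((k : ℝ) - 1))) := by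
  intro k hk
  have hdec : ∀ j, A (j + 1) ≤ A j := by
    intro j
    nlinarith [hrec j, sq_nonneg (A (j+1)), hA (j+1)]
  have hanti : ∀ i j : ℕ, i ≤ j → A j ≤ A i := by
    intro i j hij
    induction j with
    | zero => simp_all
    | succ n ih =>
      rcases Nat.lt_or_ge i (n+1) with h | h
      · exact (hdec n).trans (ih (Nat.lt_succ_iff.mp h))
      · have : i = n + 1 := le_antisymm hij h
        simp [this]
  have hk1 : (1:ℝ) < (k:ℝ) := by exact_mod_cast hk
  by_cases hzero : A k = 0
  · rw [hzero]
    exact le_max_of_le_right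
      (le_of_lt (div_pos (by norm_num) (mul_pos hγ (by linarith))))
  · have hpos : 0 < A k := lt_of_le_of_ne (hA k) (Ne.symm hzero)
    have hposj : ∀ j, j ≤ k → 0 < A j := fun j hj => lt_of_lt_of_le hpos (hanti j k hj)
    have main : ∀ j, j ≤ k → ∃ f : ℕ, f ≤ j ∧ A j ≤ (1/2:ℝ)^f * A 0 ∧
        γ/2 * ((j:ℝ) - f) ≤ 1 / A j := by
      intro j hj
      induction j with
      | zero =>
        exact ⟨0, le_refl 0, by rw [pow_zero, one_mul],
          by simp [hA 0]⟩
      | succ n ih =>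
        obtain ⟨f, hf, hgeo, hlin⟩ := ih (Nat.le_of_succ_le hj)
        have hAn : 0 < A n := hposj n (Nat.le_of_succ_le hj)
        have hAn1 : 0 < A (n+1) := hposj (n+1) hj
        by_cases hcase : A (n+1) ≤ A n / 2
        · refine ⟨f+1, Nat.succ_le_succ hf, ?_, ?_⟩
          · calc A (n+1) ≤ A n / 2 := hcase
              _ ≤ (1/2:ℝ)^f * A 0 / 2 := by linarith
              _ = (1/2:ℝ)^(f+1) * A 0 := by ring
          · have h1 : 1 / A n ≤ 1 / A (n+1) := one_div_le_one_div_of_le hAn1 (hdec n)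
            push_cast
            calc γ/2 * ((n:ℝ) + 1 - ((f:ℝ)+1)) = γ/2 * ((n:ℝ) - f) := by ring
              _ ≤ 1 / A n := hlin
              _ ≤ 1 / A (n+1) := h1
        · push_neg at hcase
          refine ⟨f, hf.trans (Nat.le_succ n), (hdec n).trans hgeo, ?_⟩
          have key : 1 / A n + γ / 2 ≤ 1 / A (n+1) := by
            rw [div_add' _ _ _ (ne_of_gt hAn), div_le_div_iff₀ hAn hAn1]
            nlinarith [hrec n, mul_le_mul_of_nonneg_left hcase.le (le_of_lt (mul_pos hγ hAn1))]
          push_cast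
          nlinarith [hlin]
    obtain ⟨f, hf, hgeo, hlin⟩ := main k le_rfl
    rcases le_or_gt (((k:ℝ) - 1)/2) (f:ℝ) with h | h
    · refine le_max_of_le_left ?_
      calc A k ≤ (1/2:ℝ)^f * A 0 := hgeo
        _ ≤ ((1:ℝ)/2) ^ (((k:ℝ)-1)/2) * A 0 := by
          apply mul_le_mul_of_nonneg_right _ (hA 0)
          rw [← Real.rpow_natCast ((1:ℝ)/2) f]
          exact Real.rpow_le_rpow_of_exponent_ge (by norm_num) (by norm_num) h
    · refine le_max_of_le_right ?_
      have h2 : γ * ((k:ℝ)-1) / 4 ≤ 1 / A k := by nlinarith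
      rw [le_div_iff₀ (mul_pos hγ (by linarith))]
      have h3 : (γ * ((k:ℝ)-1) / 4) * A k ≤ (1 / A k) * A k :=
        mul_le_mul_of_nonneg_right h2 (hA k)
      rw [one_div_mul_cancel (ne_of_gt hpos)] at h3
      nlinarith
end

section
/- Let (A_k)_{k≥0} be a nonnegative sequence of real numbers and γ > 0 such that A_k − A_{k+1} ≥ γ·A_{k+1}² for all k ≥ 0, with A₀ > 0. Then for every ε > 0, if k ≥ max{(2/ln 2)·(ln A₀ − ln ε), 4/(γ·ε)} + 1, then A_k ≤ ε. -/
/-- If `(A_k)` is a nonnegative real sequence with `A_k − A_{k+1} ≥ γ·A_{k+1}²` for all `k`,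
`γ > 0` and `A₀ > 0`, then for every `ε > 0`, `A_k ≤ ε` whenever
`k ≥ max{(2/ln 2)·(ln A₀ − ln ε), 4/(γ·ε)} + 1`. -/
theorem seq_epsilon_iterations (A : ℕ → ℝ) (hA : ∀ k : ℕ, 0 ≤ A k) (hA0 : 0 < A 0)
    (γ : ℝ) (hγ : 0 < γ)
    (hrec : ∀ k : ℕ, A k - A (k + 1) ≥ γ * (A (k + 1)) ^ 2) :
    ∀ ε : ℝ, 0 < ε → ∀ k : ℕ,
      (k : ℝ) ≥ max ((2 / Real.log 2) * (Real.log (A 0) - Real.log ε)) (4 / (γ * ε)) + 1 →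
      A k ≤ ε := by
  have hmono : ∀ k, A (k + 1) ≤ A k := by
    intro k
    nlinarith [hrec k, sq_nonneg (A (k + 1))]
  have hlog2 : (0:ℝ) < Real.log 2 := Real.log_pos (by norm_num)
  -- key invariant
  have key : ∀ k : ℕ, 0 < A k →
      (k : ℝ) ≤ (Real.log (A 0) - Real.log (A k)) / Real.log 2
        + (2 / γ) * (1 / A k - 1 / A 0) := by
    intro k
    induction k with
    | zero => intro _; simp
    | succ k ih =>
      intro hpos
      have hAk : 0 < A k := lt_of_lt_of_le hpos (hmono k)
      have hIH := ih hAk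
      have hstep : 1 ≤ (Real.log (A k) - Real.log (A (k + 1))) / Real.log 2
          + (2 / γ) * (1 / A (k + 1) - 1 / A k) := by
        rcases le_or_gt (A (k + 1)) (A k / 2) with hc | hc
        · have h1 : Real.log (A (k + 1)) ≤ Real.log (A k) - Real.log 2 := by
            have := Real.log_le_log hpos hc
            rwa [Real.log_div (ne_of_gt hAk) (by norm_num)] at this
          have h2 : (0:ℝ) ≤ 1 / A (k + 1) - 1 / A k := by
            have := one_div_le_one_div_of_le hpos (hmono k)
            linarith
          have h3 : 1 ≤ (Real.log (A k) - Real.log (A (k + 1))) / Real.log 2 := by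
            rw [le_div_iff₀ hlog2]; linarith
          nlinarith [mul_nonneg (le_of_lt (div_pos (by norm_num : (0:ℝ) < 2) hγ)) h2]
        · have h1 : (0:ℝ) ≤ Real.log (A k) - Real.log (A (k + 1)) := by
            have := Real.log_le_log hpos (hmono k)
            linarith
          have hprod : 0 < A k * A (k + 1) := mul_pos hAk hpos
          have h3' : γ / 2 ≤ 1 / A (k + 1) - 1 / A k := by
            have e : 1 / A (k + 1) - 1 / A k = (A k - A (k + 1)) / (A k * A (k + 1)) := by
              rw [eq_div_iff (ne_of_gt hprod)]
              field_simp
            rw [e, le_div_iff₀ hprod]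
            nlinarith [hrec k, mul_lt_mul_of_pos_left hc (mul_pos hγ hpos)]
          have h3 : 1 ≤ (2 / γ) * (1 / A (k + 1) - 1 / A k) := by
            have h4 := mul_le_mul_of_nonneg_left h3'
              (le_of_lt (div_pos (by norm_num : (0:ℝ) < 2) hγ))
            have h5 : (2 / γ) * (γ / 2) = 1 := by field_simp
            linarith
          have h6 : (0:ℝ) ≤ (Real.log (A k) - Real.log (A (k + 1))) / Real.log 2 :=
            div_nonneg h1 (le_of_lt hlog2)
          linarith
      push_cast
      have heq : (Real.log (A 0) - Real.log (A (k+1))) / Real.log 2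
          + (2 / γ) * (1 / A (k+1) - 1 / A 0)
          = ((Real.log (A 0) - Real.log (A k)) / Real.log 2
            + (2 / γ) * (1 / A k - 1 / A 0))
          + ((Real.log (A k) - Real.log (A (k + 1))) / Real.log 2
            + (2 / γ) * (1 / A (k + 1) - 1 / A k)) := by ring
      rw [heq]
      linarith
  intro ε hε k hk
  by_contra hcon
  push_neg at hcon
  have hpos : 0 < A k := lt_trans hε hcon
  have hkey := key k hpos
  have hlogk : Real.log ε ≤ Real.log (A k) := Real.log_le_log hε (le_of_lt hcon)
  have hinv : 1 / A k < 1 / ε := one_div_lt_one_div_of_lt hε hcon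
  have h2γ : (0:ℝ) < 2 / γ := div_pos (by norm_num) hγ
  have hupper : (k : ℝ) < (Real.log (A 0) - Real.log ε) / Real.log 2 + 2 / (γ * ε) := by
    have t1 : (Real.log (A 0) - Real.log (A k)) / Real.log 2
        ≤ (Real.log (A 0) - Real.log ε) / Real.log 2 := by gcongr
    have t2 : (2 / γ) * (1 / A k - 1 / A 0) < 2 / (γ * ε) := by
      have hA0inv : 0 < 1 / A 0 := by positivity
      have : (2 / γ) * (1 / A k - 1 / A 0) < (2 / γ) * (1 / ε) := by
        apply mul_lt_mul_of_pos_left _ h2γ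
        linarith
      have e : (2 / γ) * (1 / ε) = 2 / (γ * ε) := by field_simp
      linarith
    linarith
  have hmax1 : (2 / Real.log 2) * (Real.log (A 0) - Real.log ε)
      ≤ max ((2 / Real.log 2) * (Real.log (A 0) - Real.log ε)) (4 / (γ * ε)) :=
    le_max_left _ _
  have hmax2 : 4 / (γ * ε)
      ≤ max ((2 / Real.log 2) * (Real.log (A 0) - Real.log ε)) (4 / (γ * ε)) :=
    le_max_right _ _
  have e1 : (2 / Real.log 2) * (Real.log (A 0) - Real.log ε)
      = 2 * ((Real.log (A 0) - Real.log ε) / Real.log 2) := by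
    field_simp
  have e2 : 4 / (γ * ε) = 2 * (2 / (γ * ε)) := by ring
  linarith [hmax1, hmax2, e1, e2]
end
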